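/- Let g be an N×N complex unitary matrix and A an arbitrary N×N complex matrix. Then Σ_k ⟨B_k, B_k A g + g A B_k⟩ = 2N Re Tr(A g) - (2η/N) Re Tr(A g), where {B_k} is an orthonormal basis of T_g SU(N) (if η = 1) or T_g U(N) (if η = 0) with respect to ⟨X,Y⟩ = (1/2) Re Tr(X† Y). -/

import Mathlib

/-!
Tangency (`gᴴ B = -Bᴴ g`) makes the two terms of each summand equal, so the sum is
`Re tr ((∑ₖ Bₖᴴ Bₖ) A g)`. Since `{Bₖ}` is orthonormal, `∑ₖ ⟨Bₖ, M⟩ Bₖ` is the orthogonal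
projection of `M` onto the tangent space, which is explicit: `M ↦ ½ (M' - g M'ᴴ g)` with
`M' = M - (η/N) tr (gᴴ M) g`. Combining `M` and `i M` turns this into the complex identity
`∑ₖ tr (Bₖᴴ M) Bₖ = 2 M - (2η/N) tr (gᴴ M) g`, whose entries give `∑ₖ Bₖᴴ Bₖ = (2N - 2η/N) I`.
-/

open Matrix

theorem LinearMap.BilinForm.sum_smul_eq_of_sub_orthogonal {R E ι : Type*} [CommRing R]
    [AddCommGroup E] [Module R E] [Fintype ι] [DecidableEq ι] (β : LinearMap.BilinForm R E)
    (B : ι → E) (hB : ∀ k l, β (B k) (B l) = if k = l then 1 else 0) {x p : E}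
    (hp : p ∈ Submodule.span R (Set.range B)) (hxp : ∀ k, β (B k) (x - p) = 0) :
    ∑ k, β (B k) x • B k = p := by
  obtain ⟨c, rfl⟩ := (Submodule.mem_span_range_iff_exists_fun R).mp hp
  have hcoeff : ∀ l, β (B l) x = c l := fun l => by
    have hl := hxp l
    rw [map_sub, sub_eq_zero] at hl
    simp [hl, map_sum, hB]
  simp only [hcoeff]

namespace UnitaryTangent

variable {n : Type*} [Fintype n]

noncomputable def reTraceForm : LinearMap.BilinForm ℝ (Matrix n n ℂ) :=
  LinearMap.mk₂ ℝ (fun X Y => (1 / 2 : ℝ) * (trace (Xᴴ * Y)).re)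
    (fun X X' Y => by simp [Matrix.add_mul, mul_add])
    (fun r X Y => by simp [Complex.real_smul]; ring)
    (fun X Y Y' => by simp [mul_add])
    (fun r X Y => by simp [Complex.real_smul]; ring)

theorem reTraceForm_apply (X Y : Matrix n n ℂ) :
    reTraceForm X Y = (1 / 2 : ℝ) * (trace (Xᴴ * Y)).re := rfl

theorem trace_conjTranspose_mul_eq_star (X Y : Matrix n n ℂ) :
    trace (Xᴴ * Y) = star (trace (Yᴴ * X)) := by
  rw [← trace_conjTranspose, conjTranspose_mul, conjTranspose_conjTranspose]

theorem trace_conjTranspose_mul_eq_reTraceForm (X Y : Matrix n n ℂ) :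
    trace (Xᴴ * Y) = 2 * reTraceForm X Y - 2 * Complex.I * reTraceForm X (Complex.I • Y) := by
  apply Complex.ext <;> simp [reTraceForm_apply]

theorem reTraceForm_smul_eq_zero {g B : Matrix n n ℂ} (hB : trace (gᴴ * B) = 0) (c : ℂ) :
    reTraceForm B (c • g) = 0 := by
  rw [reTraceForm_apply, Matrix.mul_smul, trace_smul, trace_conjTranspose_mul_eq_star, hB]
  simp

variable (g : Matrix n n ℂ)

/-- For unitary `g` this is `g` times the skew-Hermitian part of `gᴴ X`. -/
noncomputable def tangentPart (X : Matrix n n ℂ) : Matrix n n ℂ :=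
  (1 / 2 : ℂ) • (X - g * Xᴴ * g)

/-- The orthogonal projection onto `T_g U(n)` (`η = 0`) or `T_g SU(n)` (`η = 1`): for `η = 1`
the component along `g` is removed first. -/
noncomputable def tangentProj (η : ℝ) (M : Matrix n n ℂ) : Matrix n n ℂ :=
  tangentPart g (M - ((η : ℂ) / Fintype.card n * trace (gᴴ * M)) • g)

variable {g}

theorem tangentPart_I_smul (X : Matrix n n ℂ) :
    tangentPart g (Complex.I • X) = Complex.I • (1 / 2 : ℂ) • (X + g * Xᴴ * g) := by
  simp only [tangentPart, conjTranspose_smul, Complex.star_def, Complex.conj_I, Matrix.mul_smul,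
    Matrix.smul_mul]
  module

theorem tangentProj_sub_I_smul_tangentProj_I_smul (η : ℝ) (M : Matrix n n ℂ) :
    tangentProj g η M - Complex.I • tangentProj g η (Complex.I • M)
      = M - ((η : ℂ) / Fintype.card n * trace (gᴴ * M)) • g := by
  have hlin : Complex.I • M - ((η : ℂ) / Fintype.card n * trace (gᴴ * (Complex.I • M))) • g =
      Complex.I • (M - ((η : ℂ) / Fintype.card n * trace (gᴴ * M)) • g) := by
    rw [Matrix.mul_smul, trace_smul, smul_eq_mul]
    module
  rw [tangentProj, tangentProj, hlin, tangentPart_I_smul, tangentPart, smul_smul, Complex.I_mul_I]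
  module

theorem sum_trace_conjTranspose_mul_smul {ι : Type*} [Fintype ι] {η : ℝ} {B : ι → Matrix n n ℂ}
    (hB : ∀ M, ∑ k, reTraceForm (B k) M • B k = tangentProj g η M) (M : Matrix n n ℂ) :
    ∑ k, trace ((B k)ᴴ * M) • B k
      = (2 : ℂ) • (M - ((η : ℂ) / Fintype.card n * trace (gᴴ * M)) • g) := by
  have hk : ∀ k, trace ((B k)ᴴ * M) • B k = (2 : ℂ) • (reTraceForm (B k) M • B k
      - Complex.I • reTraceForm (B k) (Complex.I • M) • B k) := fun k => by
    rw [trace_conjTranspose_mul_eq_reTraceForm]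
    module
  simp only [hk, ← Finset.smul_sum, Finset.sum_sub_distrib, hB,
    tangentProj_sub_I_smul_tangentProj_I_smul]

variable [DecidableEq n]

theorem tangentPart_isTangent (hg : gᴴ * g = 1) (X : Matrix n n ℂ) :
    gᴴ * tangentPart g X + (tangentPart g X)ᴴ * g = 0 := by
  have h1 : gᴴ * g * Xᴴ * g = Xᴴ * g := by rw [hg, Matrix.one_mul]
  have h2 : gᴴ * X * gᴴ * g = gᴴ * X := by rw [Matrix.mul_assoc, hg, Matrix.mul_one]
  simp only [tangentPart, conjTranspose_smul, conjTranspose_sub, conjTranspose_mul,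
    conjTranspose_conjTranspose, Matrix.mul_smul, Matrix.smul_mul, Matrix.mul_sub, Matrix.sub_mul,
    ← Matrix.mul_assoc, h1, h2, star_div₀, star_one, star_ofNat]
  module

theorem trace_conjTranspose_mul_tangentPart (hg : gᴴ * g = 1) (X : Matrix n n ℂ) :
    trace (gᴴ * tangentPart g X)
      = (1 / 2 : ℂ) * (trace (gᴴ * X) - star (trace (gᴴ * X))) := by
  have h1 : gᴴ * (g * Xᴴ * g) = Xᴴ * g := by
    rw [← Matrix.mul_assoc, ← Matrix.mul_assoc, hg, Matrix.one_mul]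
  rw [tangentPart, Matrix.mul_smul, Matrix.mul_sub, h1, trace_smul, trace_sub,
    trace_conjTranspose_mul_eq_star X g, smul_eq_mul]

theorem trace_conjTranspose_mul_sub_smul (hg : gᴴ * g = 1) (η : ℝ) (M : Matrix n n ℂ) :
    trace (gᴴ * (M - ((η : ℂ) / Fintype.card n * trace (gᴴ * M)) • g))
      = (1 - η) * trace (gᴴ * M) := by
  rcases (Fintype.card n).eq_zero_or_pos with hn | hn
  · have : IsEmpty n := Fintype.card_eq_zero_iff.mp hn
    simp [trace_eq_zero_of_isEmpty]
  · have : (Fintype.card n : ℂ) ≠ 0 := Nat.cast_ne_zero.mpr hn.ne'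
    rw [Matrix.mul_sub, Matrix.mul_smul, hg, trace_sub, trace_smul, trace_one, smul_eq_mul]
    field_simp

theorem trace_conjTranspose_mul_tangentProj_one (hg : gᴴ * g = 1) (M : Matrix n n ℂ) :
    trace (gᴴ * tangentProj g 1 M) = 0 := by
  rw [tangentProj, trace_conjTranspose_mul_tangentPart hg, trace_conjTranspose_mul_sub_smul hg]
  simp

theorem reTraceForm_add_mul_conjTranspose_mul_eq_zero (hg : g * gᴴ = 1) {B : Matrix n n ℂ}
    (hB : gᴴ * B + Bᴴ * g = 0) (X : Matrix n n ℂ) : reTraceForm B (X + g * Xᴴ * g) = 0 := by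
  have hBg : Bᴴ * g = -(gᴴ * B) := eq_neg_of_add_eq_zero_right hB
  have : trace (Bᴴ * (g * Xᴴ * g)) = -star (trace (Bᴴ * X)) := by
    rw [← Matrix.mul_assoc, ← Matrix.mul_assoc, hBg, trace_mul_comm, ← Matrix.mul_assoc,
      Matrix.mul_neg, ← Matrix.mul_assoc, hg, Matrix.one_mul, Matrix.neg_mul, trace_neg,
      trace_mul_comm B, trace_conjTranspose_mul_eq_star X B]
  rw [map_add, reTraceForm_apply, reTraceForm_apply, this]
  simp

theorem reTraceForm_sub_tangentProj_eq_zero (hg : gᴴ * g = 1) {η : ℝ} {B : Matrix n n ℂ}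
    (hB : gᴴ * B + Bᴴ * g = 0) (hη : η = 0 ∨ trace (gᴴ * B) = 0) (M : Matrix n n ℂ) :
    reTraceForm B (M - tangentProj g η M) = 0 := by
  set c : ℂ := (η : ℂ) / Fintype.card n * trace (gᴴ * M)
  set Q := M - c • g
  have hsplit : M - tangentProj g η M = (1 / 2 : ℝ) • (Q + g * Qᴴ * g) + c • g := by
    simp only [tangentProj, tangentPart, Q]
    module
  rw [hsplit, map_add, map_smul,
    reTraceForm_add_mul_conjTranspose_mul_eq_zero (mul_eq_one_comm.mp hg) hB]
  rcases hη with rfl | h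
  · simp [c]
  · simp [reTraceForm_smul_eq_zero h]

theorem sum_conjTranspose_mul_self_eq {ι : Type*} [Fintype ι] (hg : gᴴ * g = 1) (c : ℂ)
    {B : ι → Matrix n n ℂ}
    (hB : ∀ M, ∑ k, trace ((B k)ᴴ * M) • B k = (2 : ℂ) • (M - (c * trace (gᴴ * M)) • g)) :
    ∑ k, (B k)ᴴ * B k = (2 * Fintype.card n - 2 * c) • (1 : Matrix n n ℂ) := by
  ext i q
  have hentry : ∀ j, ∑ k, star (B k j i) * B k j q
      = 2 * (if i = q then 1 else 0) - 2 * c * (star (g j i) * g j q) := fun j => by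
    have hjq := congrFun (congrFun (hB (single j i 1)) j) q
    simp only [Matrix.sum_apply, Matrix.smul_apply, trace_mul_single, Matrix.sub_apply,
      single_apply] at hjq
    simpa [mul_sub, mul_assoc] using hjq
  calc (∑ k, (B k)ᴴ * B k) i q = ∑ j, ∑ k, star (B k j i) * B k j q := by
        simp only [Matrix.sum_apply, mul_apply, conjTranspose_apply]
        exact Finset.sum_comm
    _ = 2 * Fintype.card n * (if i = q then 1 else 0) - 2 * c * (gᴴ * g) i q := by
        simp only [hentry, Finset.sum_sub_distrib, ← Finset.mul_sum, mul_apply, conjTranspose_apply]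
        simp [mul_comm]
    _ = _ := by
        rw [hg]
        simp [one_apply]
        split_ifs <;> ring

theorem trace_conjTranspose_mul_mul_of_tangent (hg : gᴴ * g = 1) {B : Matrix n n ℂ}
    (hB : gᴴ * B + Bᴴ * g = 0) (A : Matrix n n ℂ) :
    trace (Bᴴ * (g * A * B)) = trace (Bᴴ * B * (A * g)) := by
  have hBg : Bᴴ * g = -(gᴴ * B) := eq_neg_of_add_eq_zero_right hB
  have hgB : g * Bᴴ = -(B * gᴴ) := by
    calc g * Bᴴ = g * Bᴴ * g * gᴴ := by rw [Matrix.mul_assoc _ g, mul_eq_one_comm.mp hg, Matrix.mul_one]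
      _ = -(B * gᴴ) := by
        rw [Matrix.mul_assoc g, hBg, Matrix.mul_neg, ← Matrix.mul_assoc, mul_eq_one_comm.mp hg,
          Matrix.one_mul, Matrix.neg_mul]
  calc trace (Bᴴ * (g * A * B)) = trace (Bᴴ * g * A * B) := by simp only [Matrix.mul_assoc]
    _ = trace (B * (Bᴴ * g * A)) := trace_mul_comm _ _
    _ = -trace (B * gᴴ * B * A) := by
        rw [hBg]; simp only [Matrix.mul_neg, Matrix.neg_mul, trace_neg, Matrix.mul_assoc]
    _ = trace (g * Bᴴ * B * A) := by
        rw [hgB]; simp only [Matrix.neg_mul, trace_neg, Matrix.mul_assoc]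
    _ = trace (Bᴴ * B * (A * g)) := by
        rw [Matrix.mul_assoc (g * Bᴴ), Matrix.mul_assoc g, trace_mul_comm g]
        simp only [Matrix.mul_assoc]

end UnitaryTangent

open UnitaryTangent

theorem stmt_17_general {N : ℕ} (g : Matrix (Fin N) (Fin N) ℂ)
    (hg : gᴴ * g = 1) (η : ℝ) (hη : η = 0 ∨ η = 1)
    {ι : Type*} [Fintype ι] [DecidableEq ι] (B : ι → Matrix (Fin N) (Fin N) ℂ)
    (htang : ∀ k, gᴴ * B k + (B k)ᴴ * g = 0
      ∧ (η = 1 → Matrix.trace (g⁻¹ * B k) = 0))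
    (horth : ∀ k l, (1/2 : ℝ) * (Matrix.trace ((B k)ᴴ * B l)).re
      = if k = l then 1 else 0)
    (hspan : ∀ M : Matrix (Fin N) (Fin N) ℂ,
      gᴴ * M + Mᴴ * g = 0 → (η = 1 → Matrix.trace (g⁻¹ * M) = 0) →
      M ∈ Submodule.span ℝ (Set.range B))
    (A : Matrix (Fin N) (Fin N) ℂ) :
    ∑ k, (1/2 : ℝ) * (Matrix.trace ((B k)ᴴ * (B k * A * g + g * A * B k))).re
      = 2 * (N : ℝ) * (Matrix.trace (A * g)).re
        - (2 * η / (N : ℝ)) * (Matrix.trace (A * g)).re := by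
  rw [inv_eq_left_inv hg] at htang hspan
  have hproj : ∀ M, ∑ k, reTraceForm (B k) M • B k = tangentProj g η M := fun M =>
    reTraceForm.sum_smul_eq_of_sub_orthogonal B horth
      (hspan _ (tangentPart_isTangent hg _) fun h => h ▸ trace_conjTranspose_mul_tangentProj_one hg M)
      fun k => reTraceForm_sub_tangentProj_eq_zero hg (htang k).1 (hη.imp_right (htang k).2) M
  have hgram := sum_conjTranspose_mul_self_eq hg _ (sum_trace_conjTranspose_mul_smul hproj)
  calc ∑ k, (1/2 : ℝ) * (trace ((B k)ᴴ * (B k * A * g + g * A * B k))).re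
      = ∑ k, (trace ((B k)ᴴ * B k * (A * g))).re := by
        refine Finset.sum_congr rfl fun k _ => ?_
        have hfirst : trace ((B k)ᴴ * (B k * A * g)) = trace ((B k)ᴴ * B k * (A * g)) := by
          simp only [Matrix.mul_assoc]
        rw [Matrix.mul_add, trace_add, hfirst, trace_conjTranspose_mul_mul_of_tangent hg (htang k).1,
          Complex.add_re]
        ring
    _ = (trace ((∑ k, (B k)ᴴ * B k) * (A * g))).re := by
        rw [Finset.sum_mul, trace_sum, Complex.re_sum]
    _ = _ := by
        rw [hgram, smul_mul, Matrix.one_mul, trace_smul, smul_eq_mul]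
        simp
        ring

/-- For unitary g and any orthonormal basis {B_k} of T_g SU(N) (η = 1) or T_g U(N)
(η = 0) w.r.t. ⟨X,Y⟩ = (1/2)Re Tr(XᴴY),
∑_k ⟨B_k, B_k A g + g A B_k⟩ = 2N Re Tr(Ag) - (2η/N) Re Tr(Ag). -/
theorem stmt_17 {N : ℕ} (g : Matrix (Fin N) (Fin N) ℂ)
    (hg : gᴴ * g = 1) (η : ℝ) (hη : η = 0 ∨ η = 1)
    (hdet : η = 1 → g.det = 1)
    {ι : Type*} [Fintype ι] [DecidableEq ι] (B : ι → Matrix (Fin N) (Fin N) ℂ)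
    (htang : ∀ k, gᴴ * B k + (B k)ᴴ * g = 0
      ∧ (η = 1 → Matrix.trace (g⁻¹ * B k) = 0))
    (horth : ∀ k l, (1/2 : ℝ) * (Matrix.trace ((B k)ᴴ * B l)).re
      = if k = l then 1 else 0)
    (hspan : ∀ M : Matrix (Fin N) (Fin N) ℂ,
      gᴴ * M + Mᴴ * g = 0 → (η = 1 → Matrix.trace (g⁻¹ * M) = 0) →
      M ∈ Submodule.span ℝ (Set.range B))
    (A : Matrix (Fin N) (Fin N) ℂ) :
    ∑ k, (1/2 : ℝ) * (Matrix.trace ((B k)ᴴ * (B k * A * g + g * A * B k))).re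
      = 2 * (N : ℝ) * (Matrix.trace (A * g)).re
        - (2 * η / (N : ℝ)) * (Matrix.trace (A * g)).re :=
  stmt_17_general g hg η hη B htang horth hspan A
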